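/- arXiv:1812.10949 — 5 statements merged into one kernel-verified Lean document; each statement's English description precedes it below -/
import Mathlib

section
/- Let X be a compact Hausdorff space, μ a Borel probability measure on X, and τ a topological measure on X such that for every closed solid set C ⊆ X, τ(C) = 0 if μ(C) < 1/2 and τ(C) = 1 if μ(C) ≥ 1/2. Then for every open solid set O ⊆ X: τ(O) = 0 if μ(O) ≤ 1/2, and τ(O) = 1 if μ(O) > 1/2. -/
open MeasureTheory Topology Metric Filter
open scoped Manifold NNReal ENNReal

/-- A quasi-state on a topological space `X`: a functional on `C(X,ℝ)` which is
normalized, monotone, and linear on each singly-generated subalgebra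
`C(f) = {φ ∘ f | φ : ℝ → ℝ continuous}`. -/
structure QuasiState (X : Type*) [TopologicalSpace X] where
  toFun : C(X, ℝ) → ℝ
  normalized : toFun 1 = 1
  mono : ∀ f g : C(X, ℝ), (∀ x, f x ≤ g x) → toFun f ≤ toFun g
  add_comp : ∀ (φ ψ : C(ℝ, ℝ)) (f : C(X, ℝ)),
    toFun (φ.comp f + ψ.comp f) = toFun (φ.comp f) + toFun (ψ.comp f)
  smul_comp : ∀ (c : ℝ) (φ : C(ℝ, ℝ)) (f : C(X, ℝ)),
    toFun (c • φ.comp f) = c * toFun (φ.comp f)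

/-- A topological measure on `X`: a `[0,1]`-valued set function defined on the
collection of open or closed subsets, normalized, monotone, finitely additive
on disjoint unions that stay in the collection, and inner regular on opens. -/
structure TopMeasure (X : Type*) [TopologicalSpace X] where
  toFun : Set X → ℝ
  nonneg : ∀ A : Set X, (IsOpen A ∨ IsClosed A) → 0 ≤ toFun A
  le_one : ∀ A : Set X, (IsOpen A ∨ IsClosed A) → toFun A ≤ 1
  apply_univ : toFun Set.univ = 1
  mono : ∀ A A' : Set X, (IsOpen A ∨ IsClosed A) → (IsOpen A' ∨ IsClosed A') →
    A ⊆ A' → toFun A ≤ toFun A'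
  additive : ∀ (m : ℕ) (A : Set X) (B : Fin m → Set X),
    (IsOpen A ∨ IsClosed A) → (∀ i, IsOpen (B i) ∨ IsClosed (B i)) →
    (Pairwise fun i j => Disjoint (B i) (B j)) → A = ⋃ i, B i →
    toFun A = ∑ i, toFun (B i)
  regular : ∀ O : Set X, IsOpen O →
    toFun O = sSup {t : ℝ | ∃ K : Set X, IsClosed K ∧ K ⊆ O ∧ t = toFun K}

/-- A quasi-state and a topological measure correspond to one another under the
Aarnes representation theorem. -/
def Corresponds {X : Type*} [TopologicalSpace X] (ζ : QuasiState X) (τ : TopMeasure X) : Prop :=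
  ∀ f : C(X, ℝ), ζ.toFun f = sInf (Set.range f) +
    ∫ s in Set.Icc (sInf (Set.range f)) (sSup (Set.range f)), τ.toFun {x | s ≤ f x}

/-- A set is solid if it and its complement are both connected. -/
def IsSolid {X : Type*} [TopologicalSpace X] (A : Set X) : Prop :=
  IsPreconnected A ∧ IsPreconnected Aᶜ

/-- The (split) spectrum of a Borel probability measure. -/
def measureSpec {X : Type*} [TopologicalSpace X] [MeasurableSpace X]
    (μ : Measure X) : Set ℝ :=
  {α | α ∈ Set.Ioo (0 : ℝ) 1 ∧ ∃ C C' : Set X, IsClosed C ∧ IsSolid C ∧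
    IsClosed C' ∧ IsSolid C' ∧ Disjoint C C' ∧
    μ C = ENNReal.ofReal α ∧ μ C' = ENNReal.ofReal (1 - α)}

/-- `μ ∈ P₀(X)`: a Borel probability measure whose spectrum avoids `1/2`. -/
def MemP0 {X : Type*} [TopologicalSpace X] [MeasurableSpace X] (μ : Measure X) : Prop :=
  IsProbabilityMeasure μ ∧ (1/2 : ℝ) ∉ measureSpec μ

/-- The Aarnes condition for the topological measure `τ` with respect to `μ`:
on closed solid sets, `τ` is `0` below measure `1/2` and `1` from `1/2` on. -/
def AarnesCondition {X : Type*} [TopologicalSpace X] [MeasurableSpace X]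
    (τ : TopMeasure X) (μ : Measure X) : Prop :=
  ∀ C : Set X, IsClosed C → IsSolid C →
    (μ C < 1/2 → τ.toFun C = 0) ∧ (1/2 ≤ μ C → τ.toFun C = 1)

/-- The support of a measure on a topological space. -/
def measureSupport {Y : Type*} [TopologicalSpace Y] [MeasurableSpace Y] (ρ : Measure Y) : Set Y :=
  {y | ∀ U : Set Y, IsOpen U → y ∈ U → ρ U ≠ 0}

/-- The `∞`-Wasserstein distance between two Borel probability measures. -/
noncomputable def Winf {X : Type*} [MetricSpace X] [MeasurableSpace X]
    (μ ν : Measure X) : ℝ :=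
  sInf {r : ℝ | ∃ ρ : Measure (X × X), IsProbabilityMeasure ρ ∧
    ρ.map Prod.fst = μ ∧ ρ.map Prod.snd = ν ∧
    ∀ p ∈ measureSupport ρ, dist p.1 p.2 ≤ r}

/-- The `1`-Wasserstein (Kantorovich–Rubinstein dual) distance between quasi-states. -/
noncomputable def W1qs {X : Type*} [MetricSpace X] (ζ ζ' : QuasiState X) : ℝ :=
  sSup {r : ℝ | ∃ f : C(X, ℝ), LipschitzWith 1 f ∧ r = |ζ.toFun f - ζ'.toFun f|}

/-- The `1`-Wasserstein distance between measures (Kantorovich–Rubinstein dual form). -/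
noncomputable def W1meas {X : Type*} [MetricSpace X] [MeasurableSpace X]
    (μ ν : Measure X) : ℝ :=
  sSup {r : ℝ | ∃ f : X → ℝ, LipschitzWith 1 f ∧ r = |∫ x, f x ∂μ - ∫ x, f x ∂ν|}

theorem IsSolid.compl {X : Type*} [TopologicalSpace X] {A : Set X} (hA : IsSolid A) :
    IsSolid Aᶜ :=
  ⟨hA.2, (compl_compl A).symm ▸ hA.1⟩

namespace TopMeasure

variable {X : Type*} [TopologicalSpace X] (τ : TopMeasure X)

theorem apply_union {A B : Set X} (hA : IsOpen A ∨ IsClosed A) (hB : IsOpen B ∨ IsClosed B)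
    (hAB : IsOpen (A ∪ B) ∨ IsClosed (A ∪ B)) (hdisj : Disjoint A B) :
    τ.toFun (A ∪ B) = τ.toFun A + τ.toFun B := by
  have hpair : Pairwise fun i j : Fin 2 => Disjoint (![A, B] i) (![A, B] j) := by
    intro i j hij
    fin_cases i <;> fin_cases j
    exacts [absurd rfl hij, hdisj, hdisj.symm, absurd rfl hij]
  simpa [Fin.sum_univ_two] using
    τ.additive 2 (A ∪ B) ![A, B] hAB (Fin.forall_fin_two.2 ⟨hA, hB⟩) hpair
      (by ext x; simp [Fin.exists_fin_two])

theorem apply_add_apply_compl {A : Set X} (hA : IsOpen A ∨ IsClosed A) :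
    τ.toFun A + τ.toFun Aᶜ = 1 := by
  have hAc : IsOpen Aᶜ ∨ IsClosed Aᶜ := hA.symm.imp isOpen_compl_iff.2 isClosed_compl_iff.2
  rw [← τ.apply_union hA hAc (Or.inl (Set.union_compl_self A ▸ isOpen_univ))
    disjoint_compl_right, Set.union_compl_self, τ.apply_univ]

end TopMeasure

theorem ENNReal.half_le_one_sub {a : ℝ≥0∞} (ha : a ≤ 1 / 2) : 1 / 2 ≤ 1 - a :=
  calc 1 / 2 = 1 - 1 / 2 := by rw [one_div, ENNReal.one_sub_inv_two]
    _ ≤ 1 - a := tsub_le_tsub_left ha 1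

theorem ENNReal.one_sub_lt_half {a : ℝ≥0∞} (ha : 1 / 2 < a) : 1 - a < 1 / 2 := by
  rcases le_or_gt a 1 with ha1 | ha1
  · refine ENNReal.sub_lt_of_lt_add ha1 ?_
    calc (1 : ℝ≥0∞) = 1 / 2 + 1 / 2 := (ENNReal.add_halves 1).symm
      _ < 1 / 2 + a := ENNReal.add_lt_add_left (by norm_num) ha
  · rw [tsub_eq_zero_of_le ha1.le]
    norm_num

theorem aarnes_on_open_solid_general {X : Type*} [TopologicalSpace X]
    [MeasurableSpace X] [BorelSpace X]
    (μ : Measure X) [IsProbabilityMeasure μ] (τ : TopMeasure X)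
    (h : AarnesCondition τ μ) (O : Set X) (hO : IsOpen O) (hsolid : IsSolid O) :
    (μ O ≤ 1/2 → τ.toFun O = 0) ∧ (1/2 < μ O → τ.toFun O = 1) := by
  have hcompl := h Oᶜ hO.isClosed_compl hsolid.compl
  rw [prob_compl_eq_one_sub hO.measurableSet] at hcompl
  have hsum := τ.apply_add_apply_compl (Or.inl hO)
  exact ⟨fun hle => by linarith [hcompl.2 (ENNReal.half_le_one_sub hle)],
    fun hlt => by linarith [hcompl.1 (ENNReal.one_sub_lt_half hlt)]⟩

/-- if `τ` satisfies the Aarnes condition with respect to `μ` on closed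
solid sets, then on open solid sets `τ` is `0` up to measure `1/2` and `1` above. -/
theorem aarnes_on_open_solid {X : Type*} [TopologicalSpace X] [CompactSpace X] [T2Space X]
    [MeasurableSpace X] [BorelSpace X]
    (μ : Measure X) [IsProbabilityMeasure μ] (τ : TopMeasure X)
    (h : AarnesCondition τ μ) (O : Set X) (hO : IsOpen O) (hsolid : IsSolid O) :
    (μ O ≤ 1/2 → τ.toFun O = 0) ∧ (1/2 < μ O → τ.toFun O = 1) :=
  aarnes_on_open_solid_general μ τ h O hO hsolid
end

section
/- Let (X,d) be a compact metric space, and let ζ_n (n ∈ ℕ) and ζ be quasi-states on X. Then W₁(ζ_n, ζ) → 0 as n → ∞ if and only if ζ_n(f) → ζ(f) for every f ∈ C(X,ℝ). In other words, the metric W₁ on the set of quasi-states induces the weak topology. -/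
open MeasureTheory Topology Metric Filter
open scoped Manifold NNReal ENNReal

/-!
A quasi-state is monotone and commutes with adding constants, hence is `1`-Lipschitz for the sup
norm, so quasi-states form a uniformly equicontinuous family of functionals on `C(X, ℝ)`.
If `W₁(ζₙ, ζ) → 0`, rescaling gives `ζₙ(f) → ζ(f)` for every Lipschitz `f`, and equicontinuity
extends this to the closure of the Lipschitz functions, which is all of `C(X, ℝ)` by the lattice
version of Stone–Weierstrass. Conversely, up to additive constants the `1`-Lipschitz functions
form a compact set (Arzelà–Ascoli), on which pointwise convergence of an equicontinuous family
is uniform.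
-/

namespace QuasiState

variable {X : Type*} [TopologicalSpace X] (ζ : QuasiState X)

theorem apply_const (c : ℝ) : ζ.toFun (ContinuousMap.const X c) = c := by
  have h := ζ.smul_comp c (ContinuousMap.const ℝ 1) 1
  rw [ContinuousMap.const_comp, ContinuousMap.const_one, ζ.normalized, mul_one] at h
  convert h using 2
  ext
  simp

theorem apply_smul (c : ℝ) (f : C(X, ℝ)) : ζ.toFun (c • f) = c * ζ.toFun f := by
  simpa using ζ.smul_comp c (ContinuousMap.id ℝ) f

theorem apply_add_const (f : C(X, ℝ)) (c : ℝ) :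
    ζ.toFun (f + ContinuousMap.const X c) = ζ.toFun f + c := by
  simpa [apply_const] using ζ.add_comp (ContinuousMap.id ℝ) (ContinuousMap.const ℝ c) f

theorem lipschitzWith_toFun [CompactSpace X] : LipschitzWith 1 ζ.toFun := by
  have key : ∀ f g : C(X, ℝ), ζ.toFun f ≤ ζ.toFun g + dist f g := fun f g => by
    rw [← apply_add_const]
    refine ζ.mono _ _ fun x => ?_
    have := (abs_sub_le_iff.1 (ContinuousMap.dist_apply_le_dist (f := f) (g := g) x)).1
    simp only [ContinuousMap.add_apply, ContinuousMap.const_apply]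
    linarith
  refine LipschitzWith.of_dist_le_mul fun f g => ?_
  rw [NNReal.coe_one, one_mul, Real.dist_eq, abs_sub_le_iff]
  exact ⟨by linarith [key f g], by linarith [key g f, dist_comm f g]⟩

theorem abs_apply_le_norm [CompactSpace X] (f : C(X, ℝ)) : |ζ.toFun f| ≤ ‖f‖ := by
  have h0 : ζ.toFun 0 = 0 := by simpa using ζ.apply_const 0
  simpa [Real.dist_eq, h0] using ζ.lipschitzWith_toFun.dist_le_mul f 0

end QuasiState

theorem ContinuousMap.dense_setOf_lipschitzWith {X : Type*} [MetricSpace X] [CompactSpace X] :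
    Dense {f : C(X, ℝ) | ∃ K, LipschitzWith K f} := by
  refine dense_iff_closure_eq.2 (ContinuousMap.sublattice_closure_eq_top _
    ⟨0, 0, LipschitzWith.const 0⟩ (fun f ⟨K, hf⟩ g ⟨L, hg⟩ => ⟨_, hf.min hg⟩)
    (fun f ⟨K, hf⟩ g ⟨L, hg⟩ => ⟨_, hf.max hg⟩) fun v x y => ?_)
  -- when `x = y`, `a` is the junk value `0` and the constant `v x` does the job
  set a := (v y - v x) / dist x y
  have hlip : LipschitzWith ‖a‖₊ fun z => v x + a * dist x z :=
    LipschitzWith.of_dist_le_mul fun z w => by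
      have := (LipschitzWith.dist_right x).dist_le_mul z w
      rw [Real.dist_eq, add_sub_add_left_eq_sub, ← mul_sub, abs_mul, coe_nnnorm, Real.norm_eq_abs]
      rw [NNReal.coe_one, one_mul, Real.dist_eq] at this
      exact mul_le_mul_of_nonneg_left this (abs_nonneg a)
  refine ⟨⟨_, hlip.continuous⟩, ⟨_, hlip⟩, by simp, ?_⟩
  rcases eq_or_ne x y with rfl | hxy
  · simp
  · simp [a, div_mul_cancel₀ _ (dist_ne_zero.2 hxy)]

section W1

variable {X : Type*} [MetricSpace X]

variable (X) in
def lipschitzTestSet : Set C(X, ℝ) :=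
  {g | LipschitzWith 1 g ∧ ∀ x, |g x| ≤ diam (Set.univ : Set X)}

theorem exists_add_const_mem_lipschitzTestSet [CompactSpace X] {f : C(X, ℝ)}
    (hf : LipschitzWith 1 f) : ∃ c, f + ContinuousMap.const X c ∈ lipschitzTestSet X := by
  have hlip (c : ℝ) : LipschitzWith 1 (f + ContinuousMap.const X c) :=
    LipschitzWith.of_dist_le_mul fun x y => by simpa using hf.dist_le_mul x y
  rcases isEmpty_or_nonempty X with hX | ⟨⟨x₀⟩⟩
  · exact ⟨0, hlip 0, isEmptyElim⟩
  refine ⟨-f x₀, hlip _, fun x => ?_⟩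
  calc |f x + -f x₀| = dist (f x) (f x₀) := by rw [Real.dist_eq, sub_eq_add_neg]
    _ ≤ dist x x₀ := by simpa using hf.dist_le_mul x x₀
    _ ≤ diam (Set.univ : Set X) :=
      dist_le_diam_of_mem isCompact_univ.isBounded (Set.mem_univ _) (Set.mem_univ _)

theorem isCompact_lipschitzTestSet [CompactSpace X] : IsCompact (lipschitzTestSet X) := by
  set D := diam (Set.univ : Set X)
  have himage : ContinuousMap.toFun '' lipschitzTestSet X =
      {g : X → ℝ | LipschitzWith 1 g} ∩ Set.univ.pi fun _ => Set.Icc (-D) D := by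
    ext g
    simp only [lipschitzTestSet, Set.mem_image, Set.mem_ofPred_eq, Set.mem_inter_iff,
      Set.mem_univ_pi, Set.mem_Icc, ← abs_le]
    exact ⟨fun ⟨f, hf, hfg⟩ => hfg ▸ hf, fun hg => ⟨⟨g, hg.1.continuous⟩, hg, rfl⟩⟩
  refine ArzelaAscoli.isCompact_of_equicontinuous _ ?_
    (LipschitzWith.uniformEquicontinuous _ 1 fun g => g.2.1).equicontinuous
  rw [himage]
  exact (isCompact_univ_pi fun _ => isCompact_Icc).inter_left (isClosed_setOfPred_lipschitzWith 1)

theorem W1qs_nonneg (ζ ζ' : QuasiState X) : 0 ≤ W1qs ζ ζ' :=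
  Real.sSup_nonneg fun _ ⟨_, _, hr⟩ => hr ▸ abs_nonneg _

theorem abs_sub_le_W1qs [CompactSpace X] (ζ ζ' : QuasiState X) {f : C(X, ℝ)}
    (hf : LipschitzWith 1 f) : |ζ.toFun f - ζ'.toFun f| ≤ W1qs ζ ζ' := by
  refine le_csSup ⟨2 * diam (Set.univ : Set X), ?_⟩ ⟨f, hf, rfl⟩
  rintro _ ⟨g, hg, rfl⟩
  obtain ⟨c, -, hbound⟩ := exists_add_const_mem_lipschitzTestSet hg
  have hnorm : ‖g + ContinuousMap.const X c‖ ≤ diam (Set.univ : Set X) :=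
    (ContinuousMap.norm_le _ diam_nonneg).2 hbound
  have h₁ := ζ.abs_apply_le_norm (g + ContinuousMap.const X c)
  have h₂ := ζ'.abs_apply_le_norm (g + ContinuousMap.const X c)
  rw [QuasiState.apply_add_const] at h₁ h₂
  calc |ζ.toFun g - ζ'.toFun g| = |(ζ.toFun g + c) - (ζ'.toFun g + c)| := by ring_nf
    _ ≤ |ζ.toFun g + c| + |ζ'.toFun g + c| := abs_sub _ _
    _ ≤ 2 * diam (Set.univ : Set X) := by linarith

theorem W1qs_le [CompactSpace X] {ζ ζ' : QuasiState X} {ε : ℝ} (hε : 0 ≤ ε)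
    (h : ∀ g ∈ lipschitzTestSet X, |ζ.toFun g - ζ'.toFun g| ≤ ε) : W1qs ζ ζ' ≤ ε := by
  refine Real.sSup_le (fun _ ⟨f, hf, hr⟩ => ?_) hε
  obtain ⟨c, hc⟩ := exists_add_const_mem_lipschitzTestSet hf
  simpa [hr, QuasiState.apply_add_const] using h _ hc

end W1

section Convergence

variable {X ι : Type*} [MetricSpace X] [CompactSpace X] {l : Filter ι} {ζ : ι → QuasiState X}
  {ζ₀ : QuasiState X}

theorem QuasiState.isClosed_setOf_tendsto_apply :
    IsClosed {f : C(X, ℝ) | Tendsto (fun k => (ζ k).toFun f) l (𝓝 (ζ₀.toFun f))} :=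
  (LipschitzWith.uniformEquicontinuous _ 1 fun k => (ζ k).lipschitzWith_toFun).equicontinuous
    |>.isClosed_setOfPred_tendsto ζ₀.lipschitzWith_toFun.continuous

theorem tendsto_apply_of_tendsto_W1qs_of_lipschitzWith
    (h : Tendsto (fun k => W1qs (ζ k) ζ₀) l (𝓝 0)) {K : ℝ≥0} {f : C(X, ℝ)}
    (hf : LipschitzWith K f) : Tendsto (fun k => (ζ k).toFun f) l (𝓝 (ζ₀.toFun f)) := by
  have hK : (0 : ℝ) < K + 1 := by positivity
  set g := (K + 1 : ℝ)⁻¹ • f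
  have hg : LipschitzWith 1 g := LipschitzWith.of_dist_le_mul fun x y => by
    have := (hf.weaken (le_add_of_nonneg_right zero_le_one)).dist_le_mul x y
    rw [NNReal.coe_add, NNReal.coe_one] at this
    rw [NNReal.coe_one, one_mul, ContinuousMap.smul_apply, ContinuousMap.smul_apply,
      dist_smul₀, Real.norm_eq_abs, abs_inv, abs_of_pos hK, inv_mul_le_iff₀ hK]
    exact this
  have hfg : f = (K + 1 : ℝ) • g := by simp [g, smul_smul, hK.ne']
  have hg_tendsto : Tendsto (fun k => (ζ k).toFun g) l (𝓝 (ζ₀.toFun g)) := by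
    rw [tendsto_iff_dist_tendsto_zero]
    exact squeeze_zero (fun _ => dist_nonneg)
      (fun k => (Real.dist_eq _ _).trans_le (abs_sub_le_W1qs _ _ hg)) h
  rw [hfg]
  simpa only [QuasiState.apply_smul] using hg_tendsto.const_mul (K + 1 : ℝ)

theorem tendsto_apply_of_tendsto_W1qs (h : Tendsto (fun k => W1qs (ζ k) ζ₀) l (𝓝 0))
    (f : C(X, ℝ)) : Tendsto (fun k => (ζ k).toFun f) l (𝓝 (ζ₀.toFun f)) :=
  QuasiState.isClosed_setOf_tendsto_apply.closure_subset_iff.2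
    (fun _ hg => tendsto_apply_of_tendsto_W1qs_of_lipschitzWith h hg.choose_spec)
    (ContinuousMap.dense_setOf_lipschitzWith f)

theorem tendsto_W1qs_of_tendsto_apply
    (h : ∀ f, Tendsto (fun k => (ζ k).toFun f) l (𝓝 (ζ₀.toFun f))) :
    Tendsto (fun k => W1qs (ζ k) ζ₀) l (𝓝 0) := by
  have := isCompact_iff_compactSpace.1 (isCompact_lipschitzTestSet (X := X))
  set F : ι → lipschitzTestSet X → ℝ := fun k g => (ζ k).toFun g
  have hF : Equicontinuous F := (LipschitzWith.uniformEquicontinuous F 1 fun k =>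
    mul_one (1 : ℝ≥0) ▸ (ζ k).lipschitzWith_toFun.comp (LipschitzWith.subtype_val _)).equicontinuous
  have hunif : TendstoUniformly F (fun g => ζ₀.toFun g) l :=
    UniformFun.tendsto_iff_tendstoUniformly.1 <|
      (hF.tendsto_uniformFun_iff_pi l _).2 (tendsto_pi_nhds.2 fun g => h g)
  rw [Metric.tendsto_nhds]
  intro ε hε
  filter_upwards [Metric.tendstoUniformly_iff.1 hunif (ε / 2) (half_pos hε)] with k hk
  rw [Real.dist_eq, sub_zero, abs_of_nonneg (W1qs_nonneg _ _)]
  refine (W1qs_le (half_pos hε).le fun g hg => ?_).trans_lt (half_lt_self hε)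
  simpa [F, Real.dist_eq, abs_sub_comm] using (hk ⟨g, hg⟩).le

end Convergence

/-- on a compact metric space, `W₁` induces the weak topology on
quasi-states: `W₁(ζ_n, ζ) → 0` iff `ζ_n(f) → ζ(f)` for every `f ∈ C(X,ℝ)`. -/
theorem W1qs_tendsto_zero_iff_weak {X : Type*} [MetricSpace X] [CompactSpace X]
    (ζ : ℕ → QuasiState X) (ζ₀ : QuasiState X) :
    Tendsto (fun k => W1qs (ζ k) ζ₀) atTop (nhds 0) ↔
      ∀ f : C(X, ℝ), Tendsto (fun k => (ζ k).toFun f) atTop (nhds (ζ₀.toFun f)) :=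
  ⟨tendsto_apply_of_tendsto_W1qs, tendsto_W1qs_of_tendsto_apply⟩
end

section
/- Let (X,d) be a compact connected metric space, let ζ be a quasi-state on X and τ its corresponding topological measure. Suppose there exist ε > 0 and closed subsets Y₁, …, Y₄ ⊆ X such that: τ(Y_j) = 1 for each j; the open neighborhoods Y_j^{<ε} = {x ∈ X : d(x, Y_j) < ε} have empty triple intersections (Y_i^{<ε} ∩ Y_j^{<ε} ∩ Y_k^{<ε} = ∅ for all distinct i, j, k); and Y_j^{<s} is solid for every j and every s ∈ (0, ε]. Then for every μ ∈ P₀(X) and every quasi-state ζ_μ whose corresponding topological measure satisfies the Aarnes condition with respect to μ, one has W₁(ζ, ζ_μ) ≥ ε. -/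
open MeasureTheory Topology Metric Filter
open scoped Manifold NNReal ENNReal

private lemma card_filter_le_two {p : Fin 4 → Prop} [DecidablePred p]
    (h : ∀ i j k : Fin 4, i ≠ j → i ≠ k → j ≠ k → ¬(p i ∧ p j ∧ p k)) :
    (Finset.univ.filter p).card ≤ 2 := by
  by_contra hcard
  push_neg at hcard
  obtain ⟨a, b, c, ha, hb, hc, hab, hac, hbc⟩ := Finset.two_lt_card_iff.mp hcard
  simp only [Finset.mem_filter] at ha hb hc
  exact h a b c hab hac hbc ⟨ha.2, hb.2, hc.2⟩

private lemma topMeasure_compl_add {X : Type*} [TopologicalSpace X] (τ : TopMeasure X)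
    (U : Set X) (hU : IsOpen U) : τ.toFun U + τ.toFun Uᶜ = 1 := by
  have h := τ.additive 2 Set.univ ![U, Uᶜ] (Or.inl isOpen_univ)
    (by
      intro i
      fin_cases i
      · exact Or.inl hU
      · exact Or.inr hU.isClosed_compl)
    (by
      intro i j hij
      fin_cases i <;> fin_cases j <;>
        simp_all [disjoint_compl_right, disjoint_compl_left])
    (by
      ext x
      simp [Fin.exists_fin_two, em])
  rw [τ.apply_univ, Fin.sum_univ_two] at h
  simp only [Matrix.cons_val_zero, Matrix.cons_val_one, Matrix.head_cons] at h
  linarith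

private lemma corresponds_bound {X : Type*} [MetricSpace X] [CompactSpace X] [Nonempty X]
    (ζ : QuasiState X) (τ : TopMeasure X) (h : Corresponds ζ τ) (f : C(X, ℝ)) :
    |ζ.toFun f - sInf (Set.range f)| ≤ sSup (Set.range f) - sInf (Set.range f) := by
  have hne : (Set.range (f : X → ℝ)).Nonempty := Set.range_nonempty _
  have hcomp : IsCompact (Set.range (f : X → ℝ)) := isCompact_range f.continuous
  have hmM : sInf (Set.range (f : X → ℝ)) ≤ sSup (Set.range (f : X → ℝ)) :=
    Real.sInf_le_sSup _ hcomp.bddBelow hcomp.bddAbove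
  rw [h f]
  simp only [add_sub_cancel_left]
  have hb : ∀ s ∈ Set.Icc (sInf (Set.range (f : X → ℝ))) (sSup (Set.range (f : X → ℝ))),
      ‖τ.toFun {x | s ≤ f x}‖ ≤ 1 := by
    intro s _
    have hcl : IsClosed {x | s ≤ f x} := isClosed_le continuous_const f.continuous
    rw [Real.norm_eq_abs, abs_le]
    exact ⟨by linarith [τ.nonneg _ (Or.inr hcl)], τ.le_one _ (Or.inr hcl)⟩
  have := MeasureTheory.norm_setIntegral_le_of_norm_le_const_ae'
    (by simp [Real.volume_Icc] : MeasureTheory.volume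
      (Set.Icc (sInf (Set.range (f : X → ℝ))) (sSup (Set.range (f : X → ℝ)))) < ⊤)
    (Filter.Eventually.of_forall hb)
  rw [Real.norm_eq_abs] at this
  refine this.trans ?_
  rw [measureReal_def, Real.volume_Icc, one_mul, ENNReal.toReal_ofReal (by linarith)]

/-- general non-approximation. If `τ(Y_j) = 1` for four closed sets whose
`ε`-neighborhoods have empty triple intersections and whose `s`-neighborhoods are solid
for `0 < s ≤ ε`, then `W₁(ζ, ζ_μ) ≥ ε` for every `μ ∈ P₀(X)`. -/
theorem general_non_approximation {X : Type*} [MetricSpace X] [CompactSpace X]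
    [ConnectedSpace X] [MeasurableSpace X] [BorelSpace X]
    (ζ : QuasiState X) (τ : TopMeasure X) (hζτ : Corresponds ζ τ)
    (ε : ℝ) (hε : 0 < ε) (Y : Fin 4 → Set X)
    (hYclosed : ∀ j, IsClosed (Y j)) (hτY : ∀ j, τ.toFun (Y j) = 1)
    (htriple : ∀ i j k : Fin 4, i ≠ j → i ≠ k → j ≠ k →
      {x | Metric.infDist x (Y i) < ε} ∩ {x | Metric.infDist x (Y j) < ε} ∩
        {x | Metric.infDist x (Y k) < ε} = ∅)
    (hsolid : ∀ j, ∀ s ∈ Set.Ioc (0 : ℝ) ε, IsSolid {x | Metric.infDist x (Y j) < s})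
    (μ : Measure X) (hμ : MemP0 μ)
    (ζμ : QuasiState X) (τμ : TopMeasure X) (hc : Corresponds ζμ τμ)
    (hA : AarnesCondition τμ μ) :
    ε ≤ W1qs ζ ζμ := by
  classical
  obtain ⟨hprob, -⟩ := hμ
  set A : Fin 4 → Set X := fun j => {x | Metric.infDist x (Y j) < ε} with hAdef
  have hAopen : ∀ j, IsOpen (A j) := fun j =>
    isOpen_lt (Metric.continuous_infDist_pt (Y j)) continuous_const
  have hAmeas : ∀ j, MeasurableSet (A j) := fun j => (hAopen j).measurableSet
  -- the sum of the measures of the ε-neighborhoods is at most 2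
  have hsum : ∑ j, μ (A j) ≤ 2 := by
    have hpt : ∀ x, ∑ j, (A j).indicator (fun _ => (1 : ℝ≥0∞)) x ≤ 2 := by
      intro x
      have hcard : (Finset.univ.filter fun j => x ∈ A j).card ≤ 2 := by
        apply card_filter_le_two
        rintro i j k hij hik hjk ⟨hi, hj, hk⟩
        have h := htriple i j k hij hik hjk
        have : x ∈ ({x | Metric.infDist x (Y i) < ε} ∩ {x | Metric.infDist x (Y j) < ε} ∩
            {x | Metric.infDist x (Y k) < ε}) := ⟨⟨hi, hj⟩, hk⟩
        rw [h] at this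
        exact this
      calc ∑ j, (A j).indicator (fun _ => (1 : ℝ≥0∞)) x
          = ((Finset.univ.filter fun j => x ∈ A j).card : ℝ≥0∞) := by
            simp [Set.indicator_apply, Finset.sum_boole]
        _ ≤ 2 := by exact_mod_cast Nat.cast_le.mpr hcard
    calc ∑ j, μ (A j) = ∑ j, ∫⁻ x, (A j).indicator (fun _ => (1 : ℝ≥0∞)) x ∂μ := by
          refine Finset.sum_congr rfl fun j _ => ?_
          exact (MeasureTheory.lintegral_indicator_one (hAmeas j)).symm
      _ = ∫⁻ x, ∑ j, (A j).indicator (fun _ => (1 : ℝ≥0∞)) x ∂μ := by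
          rw [MeasureTheory.lintegral_finset_sum]
          exact fun j _ => measurable_const.indicator (hAmeas j)
      _ ≤ ∫⁻ _, (2 : ℝ≥0∞) ∂μ := MeasureTheory.lintegral_mono hpt
      _ = 2 := by simp
  -- pick a neighborhood with measure at most 1/2
  obtain ⟨j, hj⟩ : ∃ j, μ (A j) ≤ 1 / 2 := by
    by_contra hno
    push_neg at hno
    have h1 : ∀ j, (1 / 2 : ℝ) < (μ (A j)).toReal := by
      intro j
      have hlt := hno j
      have hfin : μ (A j) ≠ ⊤ := measure_ne_top μ _
      have := (ENNReal.toReal_lt_toReal (by norm_num) hfin).mpr hlt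
      simpa using this
    have h2 : ∑ j, (μ (A j)).toReal ≤ 2 := by
      rw [← ENNReal.toReal_sum (fun j _ => measure_ne_top μ _)]
      calc (∑ j, μ (A j)).toReal ≤ (2 : ℝ≥0∞).toReal :=
            ENNReal.toReal_mono (by norm_num) hsum
        _ = 2 := by norm_num
    rw [Fin.sum_univ_four] at h2
    have := h1 0; have := h1 1; have := h1 2; have := h1 3
    linarith
  -- basic consequences
  have hAne : A j ≠ Set.univ := by
    intro h
    rw [h, measure_univ] at hj
    have := ENNReal.toReal_mono (by norm_num) hj
    norm_num at this
  obtain ⟨x₀, hx₀⟩ : ∃ x, x ∉ A j := by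
    by_contra h
    push_neg at h
    exact hAne (Set.eq_univ_of_forall h)
  have hx₀' : ε ≤ Metric.infDist x₀ (Y j) := not_lt.mp hx₀
  have hYne : (Y j).Nonempty := by
    rcases (Y j).eq_empty_or_nonempty with h | h
    · exfalso
      apply hx₀
      show Metric.infDist x₀ (Y j) < ε
      rw [h, Metric.infDist_empty]
      exact hε
    · exact h
  -- the test function
  set F : X → ℝ := fun x => max 0 (ε - Metric.infDist x (Y j)) with hFdef
  have hFcont : Continuous F :=
    continuous_const.max (continuous_const.sub (Metric.continuous_infDist_pt (Y j)))
  set f : C(X, ℝ) := ⟨F, hFcont⟩ with hfdef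
  have hFlip : LipschitzWith 1 F := by
    have h1 : LipschitzWith 1 (fun x => ε - Metric.infDist x (Y j)) := by
      apply LipschitzWith.of_dist_le_mul
      intro x y
      have h2 := (Metric.lipschitz_infDist_pt (Y j)).dist_le_mul x y
      rw [Real.dist_eq] at h2 ⊢
      rw [NNReal.coe_one, one_mul] at h2 ⊢
      calc |ε - Metric.infDist x (Y j) - (ε - Metric.infDist y (Y j))|
          = |Metric.infDist x (Y j) - Metric.infDist y (Y j)| := by
            rw [show ε - Metric.infDist x (Y j) - (ε - Metric.infDist y (Y j)) =
              -(Metric.infDist x (Y j) - Metric.infDist y (Y j)) by ring, abs_neg]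
        _ ≤ dist x y := h2
    have hcomm : F = fun x => max (ε - Metric.infDist x (Y j)) 0 := by
      funext x
      rw [hFdef]
      exact max_comm _ _
    rw [hcomm]
    exact h1.max_const 0
  have hFle : ∀ x, F x ≤ ε := fun x =>
    max_le hε.le (sub_le_self _ Metric.infDist_nonneg)
  have hInf : sInf (Set.range (f : X → ℝ)) = 0 := by
    apply IsLeast.csInf_eq
    constructor
    · refine ⟨x₀, ?_⟩
      show F x₀ = 0
      rw [hFdef]
      exact max_eq_left (by linarith)
    · rintro y ⟨x, rfl⟩
      exact le_max_left _ _
  have hSup : sSup (Set.range (f : X → ℝ)) = ε := by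
    apply IsGreatest.csSup_eq
    constructor
    · obtain ⟨y₀, hy₀⟩ := hYne
      refine ⟨y₀, ?_⟩
      show F y₀ = ε
      rw [hFdef]
      simp [Metric.infDist_zero_of_mem hy₀, max_eq_right hε.le]
    · rintro y ⟨x, rfl⟩
      exact hFle x
  -- value of ζ on f
  have hζ : ζ.toFun f = ε := by
    rw [hζτ f, hInf, hSup, zero_add]
    have heq : Set.EqOn (fun s => τ.toFun {x | s ≤ f x}) (fun _ => (1 : ℝ))
        (Set.Icc (0 : ℝ) ε) := by
      intro s hs
      have hsub : Y j ⊆ {x | s ≤ f x} := by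
        intro y hy
        show s ≤ F y
        have : F y = ε := by
          rw [hFdef]
          simp [Metric.infDist_zero_of_mem hy, max_eq_right hε.le]
        rw [this]
        exact hs.2
      have hcl : IsClosed {x | s ≤ f x} := isClosed_le continuous_const f.continuous
      have h1 := τ.mono (Y j) _ (Or.inr (hYclosed j)) (Or.inr hcl) hsub
      rw [hτY j] at h1
      exact le_antisymm (τ.le_one _ (Or.inr hcl)) h1
    rw [MeasureTheory.setIntegral_congr_fun measurableSet_Icc heq,
      MeasureTheory.setIntegral_const]
    simp [Real.volume_Icc, hε.le, ENNReal.toReal_ofReal]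
  -- small neighborhoods have τμ-value 0
  have hμt : ∀ t ∈ Set.Ioc (0 : ℝ) ε, τμ.toFun {x | Metric.infDist x (Y j) < t} = 0 := by
    intro t ht
    set U := {x | Metric.infDist x (Y j) < t} with hUdef
    have hUopen : IsOpen U := isOpen_lt (Metric.continuous_infDist_pt (Y j)) continuous_const
    have hUsolid := hsolid j t ht
    have hUsub : U ⊆ A j := fun x hx => lt_of_lt_of_le hx ht.2
    have hμU : μ U ≤ 1 / 2 := le_trans (measure_mono hUsub) hj
    have hcompl : μ Uᶜ = 1 - μ U := by
      rw [measure_compl hUopen.measurableSet (measure_ne_top μ U), measure_univ]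
    have h12 : (1 / 2 : ℝ≥0∞) ≤ μ Uᶜ := by
      rw [hcompl]
      have hhalf : (1 : ℝ≥0∞) - 1 / 2 = 1 / 2 := by
        rw [one_div, ENNReal.one_sub_inv_two]
      calc (1 / 2 : ℝ≥0∞) = 1 - 1 / 2 := hhalf.symm
        _ ≤ 1 - μ U := tsub_le_tsub_left hμU 1
    have hτ1 : τμ.toFun Uᶜ = 1 :=
      (hA Uᶜ hUopen.isClosed_compl ⟨hUsolid.2, by rw [compl_compl]; exact hUsolid.1⟩).2 h12
    have hadd := topMeasure_compl_add τμ U hUopen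
    have h0 := τμ.nonneg U (Or.inl hUopen)
    linarith
  -- value of ζμ on f
  have hζμ : ζμ.toFun f = 0 := by
    rw [hc f, hInf, hSup, zero_add]
    have hae : ∀ᵐ s : ℝ, s ∈ Set.Icc (0 : ℝ) ε → τμ.toFun {x | s ≤ f x} = (fun _ => (0:ℝ)) s := by
      have h0 : ∀ᵐ s : ℝ, s ≠ 0 := by
        rw [MeasureTheory.ae_iff]
        have : {a : ℝ | ¬a ≠ 0} = {0} := by ext a; simp
        rw [this]
        exact Real.volume_singleton
      filter_upwards [h0] with s hs hsIcc
      have hspos : 0 < s := lt_of_le_of_ne hsIcc.1 (Ne.symm hs)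
      have ht : ε - s / 2 ∈ Set.Ioc (0 : ℝ) ε := ⟨by linarith [hsIcc.2], by linarith⟩
      have hsub : {x | s ≤ f x} ⊆ {x | Metric.infDist x (Y j) < ε - s / 2} := by
        intro x hx
        have hx' : s ≤ F x := hx
        rw [hFdef] at hx'
        rcases le_max_iff.mp hx' with h' | h'
        · linarith
        · show Metric.infDist x (Y j) < ε - s / 2
          linarith
      have hcl : IsClosed {x | s ≤ f x} := isClosed_le continuous_const f.continuous
      have hUopen : IsOpen {x | Metric.infDist x (Y j) < ε - s / 2} :=
        isOpen_lt (Metric.continuous_infDist_pt (Y j)) continuous_const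
      have hmono := τμ.mono _ _ (Or.inr hcl) (Or.inl hUopen) hsub
      rw [hμt _ ht] at hmono
      exact le_antisymm hmono (τμ.nonneg _ (Or.inr hcl))
    rw [MeasureTheory.setIntegral_congr_ae measurableSet_Icc hae]
    simp
  -- conclusion
  have hmem : ε ∈ {r : ℝ | ∃ g : C(X, ℝ), LipschitzWith 1 g ∧
      r = |ζ.toFun g - ζμ.toFun g|} := by
    refine ⟨f, hFlip, ?_⟩
    rw [hζ, hζμ, sub_zero, abs_of_pos hε]
  have hbdd : BddAbove {r : ℝ | ∃ g : C(X, ℝ), LipschitzWith 1 g ∧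
      r = |ζ.toFun g - ζμ.toFun g|} := by
    refine ⟨2 * Metric.diam (Set.univ : Set X), ?_⟩
    rintro r ⟨g, hg, rfl⟩
    have h1 := corresponds_bound ζ τ hζτ g
    have h2 := corresponds_bound ζμ τμ hc g
    have hne : (Set.range (g : X → ℝ)).Nonempty := Set.range_nonempty _
    have hcomp : IsCompact (Set.range (g : X → ℝ)) := isCompact_range g.continuous
    obtain ⟨x1, hx1⟩ := hcomp.sSup_mem hne
    obtain ⟨x2, hx2⟩ := hcomp.sInf_mem hne
    have hdiam : sSup (Set.range (g : X → ℝ)) - sInf (Set.range (g : X → ℝ)) ≤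
        Metric.diam (Set.univ : Set X) := by
      rw [← hx1, ← hx2]
      calc g x1 - g x2 ≤ |g x1 - g x2| := le_abs_self _
        _ = dist (g x1) (g x2) := (Real.dist_eq _ _).symm
        _ ≤ 1 * dist x1 x2 := hg.dist_le_mul x1 x2
        _ ≤ Metric.diam (Set.univ : Set X) := by
            rw [one_mul]
            exact Metric.dist_le_diam_of_mem isCompact_univ.isBounded trivial trivial
    have key : |ζ.toFun g - ζμ.toFun g| ≤
        |ζ.toFun g - sInf (Set.range (g : X → ℝ))| +
        |ζμ.toFun g - sInf (Set.range (g : X → ℝ))| := by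
      have : ζ.toFun g - ζμ.toFun g =
          (ζ.toFun g - sInf (Set.range (g : X → ℝ))) -
          (ζμ.toFun g - sInf (Set.range (g : X → ℝ))) := by ring
      rw [this]
      exact (abs_sub _ _)
    linarith
  exact le_csSup hbdd hmem
end

section
/- Let z₁, z₂ ∈ ℝ² be nonzero vectors, let θ ∈ (0, π) be the angle between z₁ and z₂, and let θ₀ ∈ (0, π/2] satisfy θ₀ ≤ θ ≤ π − θ₀. Let G : ℝ² → ℝ be a linear map and L ≥ 0 with |G(z₁)| ≤ L‖z₁‖ and |G(z₂)| ≤ L‖z₂‖. Then the operator norm of G satisfies ‖G‖ ≤ L / sin(θ₀/2). -/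
open RealInnerProductSpace

private lemma sq_mul_sq_le_of_le {m c P : ℝ} (hm : 0 ≤ m) (h : m ≤ c) :
    m ^ 2 * P ^ 2 ≤ c ^ 2 * P ^ 2 := by
  have h2 : m * m ≤ c * c := mul_le_mul h h hm (hm.trans h)
  nlinarith [sq_nonneg P, mul_le_mul_of_nonneg_right h2 (sq_nonneg P)]

private lemma cauchy_two (a b P Q : ℝ) :
    (a * P + b * Q) ^ 2 ≤ (a ^ 2 + b ^ 2) * (P ^ 2 + Q ^ 2) := by
  nlinarith [sq_nonneg (a * Q - b * P)]

set_option maxHeartbeats 800000 in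
/-- a linear functional on `ℝ²` controlled on two vectors making an
angle `θ ∈ [θ₀, π − θ₀]` has operator norm at most `L / sin(θ₀/2)`. -/
theorem opNorm_le_of_two_directions
    (z₁ z₂ : EuclideanSpace ℝ (Fin 2)) (hz₁ : z₁ ≠ 0) (hz₂ : z₂ ≠ 0)
    (θ₀ : ℝ) (hθ₀ : θ₀ ∈ Set.Ioc (0 : ℝ) (Real.pi / 2))
    (hθ1 : θ₀ ≤ InnerProductGeometry.angle z₁ z₂)
    (hθ2 : InnerProductGeometry.angle z₁ z₂ ≤ Real.pi - θ₀)
    (G : EuclideanSpace ℝ (Fin 2) →L[ℝ] ℝ) (L : ℝ) (hL : 0 ≤ L)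
    (h1 : |G z₁| ≤ L * ‖z₁‖) (h2 : |G z₂| ≤ L * ‖z₂‖) :
    ‖G‖ ≤ L / Real.sin (θ₀ / 2) := by
  obtain ⟨hθ₀pos, hθ₀le⟩ := hθ₀
  have hπ := Real.pi_pos
  obtain ⟨θ, hθdef⟩ : ∃ θ', θ' = InnerProductGeometry.angle z₁ z₂ := ⟨_, rfl⟩
  rw [← hθdef] at hθ1 hθ2
  have hn₁ : (0:ℝ) < ‖z₁‖ := norm_pos_iff.mpr hz₁
  have hn₂ : (0:ℝ) < ‖z₂‖ := norm_pos_iff.mpr hz₂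
  obtain ⟨u, hu⟩ : ∃ u' : EuclideanSpace ℝ (Fin 2), u' = ‖z₁‖⁻¹ • z₁ := ⟨_, rfl⟩
  obtain ⟨v, hv⟩ : ∃ v' : EuclideanSpace ℝ (Fin 2), v' = ‖z₂‖⁻¹ • z₂ := ⟨_, rfl⟩
  have hnu : ‖u‖ = 1 := by
    rw [hu, norm_smul, norm_inv, norm_norm, inv_mul_cancel₀ hn₁.ne']
  have hnv : ‖v‖ = 1 := by
    rw [hv, norm_smul, norm_inv, norm_norm, inv_mul_cancel₀ hn₂.ne']
  have hGu : |G u| ≤ L := by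
    rw [hu, map_smul, smul_eq_mul, abs_mul, abs_inv, abs_norm, inv_mul_le_iff₀ hn₁]
    calc |G z₁| ≤ L * ‖z₁‖ := h1
    _ = ‖z₁‖ * L := by ring
  have hGv : |G v| ≤ L := by
    rw [hv, map_smul, smul_eq_mul, abs_mul, abs_inv, abs_norm, inv_mul_le_iff₀ hn₂]
    calc |G z₂| ≤ L * ‖z₂‖ := h2
    _ = ‖z₂‖ * L := by ring
  have hang : InnerProductGeometry.angle u v = θ := by
    rw [hu, hv, InnerProductGeometry.angle_smul_left_of_pos _ _ (inv_pos.mpr hn₁),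
      InnerProductGeometry.angle_smul_right_of_pos _ _ (inv_pos.mpr hn₂), hθdef]
  have hinner : ⟪u, v⟫ = Real.cos θ := by
    rw [← hang, InnerProductGeometry.cos_angle, hnu, hnv]
    simp
  have hθpos : 0 < θ := lt_of_lt_of_le hθ₀pos hθ1
  have hθlt : θ < Real.pi := lt_of_le_of_lt hθ2 (by linarith)
  obtain ⟨s, hs⟩ : ∃ s', s' = Real.sin (θ / 2) := ⟨_, rfl⟩
  obtain ⟨c, hc⟩ : ∃ c', c' = Real.cos (θ / 2) := ⟨_, rfl⟩
  obtain ⟨m, hm⟩ : ∃ m', m' = Real.sin (θ₀ / 2) := ⟨_, rfl⟩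
  have hmpos : 0 < m := by
    rw [hm]; exact Real.sin_pos_of_pos_of_lt_pi (by linarith) (by linarith)
  have hms : m ≤ s := by
    rw [hm, hs]
    exact Real.sin_le_sin_of_le_of_le_pi_div_two (by linarith) (by linarith) (by linarith)
  have hmc : m ≤ c := by
    rw [hm, hc, ← Real.sin_pi_div_two_sub]
    exact Real.sin_le_sin_of_le_of_le_pi_div_two (by linarith) (by linarith) (by linarith)
  have hspos : 0 < s := lt_of_lt_of_le hmpos hms
  have hcpos : 0 < c := lt_of_lt_of_le hmpos hmc
  have hcsq : 4 * c ^ 2 = 2 + 2 * Real.cos θ := by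
    rw [hc, Real.cos_sq, show 2 * (θ / 2) = θ by ring]; ring
  have hssq : 4 * s ^ 2 = 2 - 2 * Real.cos θ := by
    have h := Real.sin_sq_add_cos_sq (θ / 2)
    rw [← hs, ← hc] at h
    linarith
  obtain ⟨e, he⟩ : ∃ e' : EuclideanSpace ℝ (Fin 2), e' = (2 * c)⁻¹ • (u + v) := ⟨_, rfl⟩
  obtain ⟨f, hf⟩ : ∃ f' : EuclideanSpace ℝ (Fin 2), f' = (2 * s)⁻¹ • (u - v) := ⟨_, rfl⟩
  have hnormuv : ‖u + v‖ = 2 * c := by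
    have h := norm_add_sq_real u v
    rw [hnu, hnv, hinner] at h
    have h2 : ‖u + v‖ ^ 2 = (2 * c) ^ 2 := by rw [h]; linear_combination -hcsq
    rw [← Real.sqrt_sq (norm_nonneg (u + v)), h2, Real.sqrt_sq (by positivity)]
  have hnormuv' : ‖u - v‖ = 2 * s := by
    have h := norm_sub_sq_real u v
    rw [hnu, hnv, hinner] at h
    have h2 : ‖u - v‖ ^ 2 = (2 * s) ^ 2 := by rw [h]; linear_combination -hssq
    rw [← Real.sqrt_sq (norm_nonneg (u - v)), h2, Real.sqrt_sq (by positivity)]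
  have hne : ‖e‖ = 1 := by
    rw [he, norm_smul, hnormuv, norm_inv, Real.norm_eq_abs,
      abs_of_pos (by linarith), inv_mul_cancel₀ (by linarith)]
  have hnf : ‖f‖ = 1 := by
    rw [hf, norm_smul, hnormuv', norm_inv, Real.norm_eq_abs,
      abs_of_pos (by linarith), inv_mul_cancel₀ (by linarith)]
  have hef : ⟪e, f⟫ = 0 := by
    rw [he, hf, real_inner_smul_left, real_inner_smul_right]
    have huv : ⟪u + v, u - v⟫ = 0 := by
      rw [inner_sub_right, inner_add_left, inner_add_left,
        real_inner_self_eq_norm_sq, real_inner_self_eq_norm_sq, hnu, hnv,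
        real_inner_comm v u]
      ring
    rw [huv]; ring
  have hfe : ⟪f, e⟫ = 0 := by rw [real_inner_comm]; exact hef
  have hon : Orthonormal ℝ ![e, f] := by
    constructor
    · intro i; fin_cases i <;> simpa
    · intro i j hij
      fin_cases i <;> fin_cases j <;>
        first
          | exact absurd rfl hij
          | simpa using hef
          | simpa using hfe
  have hsp : Submodule.span ℝ (Set.range ![e, f]) = ⊤ := by
    apply hon.linearIndependent.span_eq_top_of_card_eq_finrank
    simp [finrank_euclideanSpace_fin]
  have hrange : Set.range ![e, f] = {e, f} := by
    ext x
    simp [Matrix.range_cons, Matrix.range_empty]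
    tauto
  obtain ⟨P, hP⟩ : ∃ P', P' = G e := ⟨_, rfl⟩
  obtain ⟨Q, hQ⟩ : ∃ Q', Q' = G f := ⟨_, rfl⟩
  obtain ⟨X, hX⟩ : ∃ X', X' = G u := ⟨_, rfl⟩
  obtain ⟨Y, hY⟩ : ∃ Y', Y' = G v := ⟨_, rfl⟩
  rw [← hX] at hGu
  rw [← hY] at hGv
  have hcP : 2 * c * P = X + Y := by
    rw [hP, hX, hY, he, map_smul, map_add, smul_eq_mul]
    field_simp
  have hsQ : 2 * s * Q = X - Y := by
    rw [hQ, hX, hY, hf, map_smul, map_sub, smul_eq_mul]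
    field_simp
  have hx2 : X ^ 2 ≤ L ^ 2 := by
    rw [← sq_abs]; exact pow_le_pow_left₀ (abs_nonneg _) hGu 2
  have hy2 : Y ^ 2 ≤ L ^ 2 := by
    rw [← sq_abs]; exact pow_le_pow_left₀ (abs_nonneg _) hGv 2
  have hPQ : m ^ 2 * (P ^ 2 + Q ^ 2) ≤ L ^ 2 := by
    have hp1 : m ^ 2 * P ^ 2 ≤ c ^ 2 * P ^ 2 := sq_mul_sq_le_of_le hmpos.le hmc
    have hp2 : m ^ 2 * Q ^ 2 ≤ s ^ 2 * Q ^ 2 := sq_mul_sq_le_of_le hmpos.le hms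
    have hp3 : 4 * (c ^ 2 * P ^ 2) + 4 * (s ^ 2 * Q ^ 2) = 2 * X ^ 2 + 2 * Y ^ 2 := by
      linear_combination (2 * c * P + X + Y) * hcP + (2 * s * Q + X - Y) * hsQ
    linarith
  have key : ∀ w : EuclideanSpace ℝ (Fin 2), |G w| ≤ L / m * ‖w‖ := by
    intro w
    have hw : w ∈ Submodule.span ℝ ({e, f} : Set (EuclideanSpace ℝ (Fin 2))) := by
      rw [← hrange, hsp]; trivial
    obtain ⟨a, b, hab⟩ := Submodule.mem_span_pair.mp hw
    have hwnorm : ‖w‖ ^ 2 = a ^ 2 + b ^ 2 := by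
      rw [← hab]
      have h := norm_add_sq_real (a • e) (b • f)
      rw [norm_smul, norm_smul, hne, hnf, real_inner_smul_left, real_inner_smul_right,
        hef] at h
      simp only [Real.norm_eq_abs, mul_one] at h
      rw [h, sq_abs, sq_abs]
      ring
    have hGw : G w = a * P + b * Q := by
      rw [← hab, map_add, map_smul, map_smul, smul_eq_mul, smul_eq_mul, hP, hQ]
    have hsq : (G w) ^ 2 ≤ (L / m * ‖w‖) ^ 2 := by
      rw [hGw, mul_pow, div_pow, div_mul_eq_mul_div, le_div_iff₀ (by positivity), hwnorm]
      have cauchy := cauchy_two a b P Q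
      have h5 := mul_le_mul_of_nonneg_right cauchy (sq_nonneg m)
      have h6 := mul_le_mul_of_nonneg_left hPQ (add_nonneg (sq_nonneg a) (sq_nonneg b))
      calc (a * P + b * Q) ^ 2 * m ^ 2
          ≤ (a ^ 2 + b ^ 2) * (P ^ 2 + Q ^ 2) * m ^ 2 := h5
        _ = (a ^ 2 + b ^ 2) * (m ^ 2 * (P ^ 2 + Q ^ 2)) := by ring
        _ ≤ (a ^ 2 + b ^ 2) * L ^ 2 := h6
        _ = L ^ 2 * (a ^ 2 + b ^ 2) := by ring
    have hR : 0 ≤ L / m * ‖w‖ := by positivity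
    have h' := Real.sqrt_le_sqrt hsq
    rwa [Real.sqrt_sq_eq_abs, Real.sqrt_sq hR] at h'
  rw [← hm]
  exact G.opNorm_le_bound (by positivity) (fun w => by
    rw [Real.norm_eq_abs]
    exact key w)
end

section
/- Let z ∈ (0,1) and let s, s' ∈ [−√(1−z²), √(1−z²)]. Then (1/2 − s·s') / √((1−s²)(1−s'²)) ≥ 1 − 1/(2z²), with equality attained at s = s' = √(1−z²). -/
/-- for `z ∈ (0,1)` and `s, s' ∈ [−√(1−z²), √(1−z²)]`, the quantity
`(1/2 − ss')/√((1−s²)(1−s'²))` is at least `1 − 1/(2z²)`, with equality at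
`s = s' = √(1−z²)`. -/
theorem cos_angle_lower_bound (z s s' : ℝ) (hz : z ∈ Set.Ioo (0 : ℝ) 1)
    (hs : s ∈ Set.Icc (-Real.sqrt (1 - z ^ 2)) (Real.sqrt (1 - z ^ 2)))
    (hs' : s' ∈ Set.Icc (-Real.sqrt (1 - z ^ 2)) (Real.sqrt (1 - z ^ 2))) :
    1 - 1 / (2 * z ^ 2) ≤ (1 / 2 - s * s') / Real.sqrt ((1 - s ^ 2) * (1 - s' ^ 2)) ∧
    (1 / 2 - Real.sqrt (1 - z ^ 2) * Real.sqrt (1 - z ^ 2)) /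
        Real.sqrt ((1 - Real.sqrt (1 - z ^ 2) ^ 2) * (1 - Real.sqrt (1 - z ^ 2) ^ 2)) =
      1 - 1 / (2 * z ^ 2) := by
  obtain ⟨hz0, hz1⟩ := hz
  have hz2 : 0 < z ^ 2 := by positivity
  have hz2' : z ^ 2 < 1 := by nlinarith
  have hW : (0:ℝ) ≤ 1 - z ^ 2 := by linarith
  have hwsq : Real.sqrt (1 - z ^ 2) ^ 2 = 1 - z ^ 2 := Real.sq_sqrt hW
  -- bounds on s, s'
  have hs2 : s ^ 2 ≤ 1 - z ^ 2 := by
    have := abs_le.2 ⟨hs.1, hs.2⟩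
    nlinarith [sq_abs s, sq_nonneg (|s| + Real.sqrt (1 - z ^ 2)), Real.sqrt_nonneg (1 - z ^ 2), abs_nonneg s]
  have hs'2 : s' ^ 2 ≤ 1 - z ^ 2 := by
    have := abs_le.2 ⟨hs'.1, hs'.2⟩
    nlinarith [sq_abs s', sq_nonneg (|s'| + Real.sqrt (1 - z ^ 2)), Real.sqrt_nonneg (1 - z ^ 2), abs_nonneg s']
  have hss' : s * s' ≤ 1 - z ^ 2 := by nlinarith [sq_nonneg (s - s')]
  have h1s : z ^ 2 ≤ 1 - s ^ 2 := by linarith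
  have h1s' : z ^ 2 ≤ 1 - s' ^ 2 := by linarith
  set D := Real.sqrt ((1 - s ^ 2) * (1 - s' ^ 2)) with hD
  have hDlo : z ^ 2 ≤ D := by
    rw [hD]
    have : (z ^ 2) ^ 2 ≤ (1 - s ^ 2) * (1 - s' ^ 2) := by nlinarith
    nlinarith [Real.sq_sqrt (show (0:ℝ) ≤ (1 - s ^ 2) * (1 - s' ^ 2) by nlinarith),
      Real.sqrt_nonneg ((1 - s ^ 2) * (1 - s' ^ 2))]
  have hDpos : 0 < D := lt_of_lt_of_le hz2 hDlo
  have hDhi : D ≤ 1 - s * s' := by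
    rw [hD]
    have h1 : (1 - s ^ 2) * (1 - s' ^ 2) ≤ (1 - s * s') ^ 2 := by nlinarith [sq_nonneg (s - s')]
    calc Real.sqrt ((1 - s ^ 2) * (1 - s' ^ 2)) ≤ Real.sqrt ((1 - s * s') ^ 2) :=
          Real.sqrt_le_sqrt h1
      _ = 1 - s * s' := Real.sqrt_sq (by nlinarith)
  constructor
  · rw [le_div_iff₀ hDpos]
    have hc : (1 / (2 * z ^ 2)) * (2 * z ^ 2) = 1 := by field_simp
    rcases le_or_gt (z ^ 2) (1 / 2) with h | h
    · -- 1 - 1/(2z²) ≤ 0, use D ≥ z²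
      have hcge : 1 ≤ 1 / (2 * z ^ 2) := by
        rw [le_div_iff₀ (by positivity)]; linarith
      nlinarith [mul_nonneg (sub_nonneg.2 hcge) (sub_nonneg.2 hDlo)]
    · -- 1 - 1/(2z²) ≥ 0, use D ≤ 1 - ss'
      have hcle : 1 / (2 * z ^ 2) ≤ 1 := by
        rw [div_le_one (by positivity)]; linarith
      nlinarith [mul_nonneg (sub_nonneg.2 hcle) (sub_nonneg.2 hDhi)]
  · rw [hwsq]
    have : Real.sqrt (1 - z ^ 2) * Real.sqrt (1 - z ^ 2) = 1 - z ^ 2 := Real.mul_self_sqrt hW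
    rw [this]
    have h2 : (1 - (1 - z ^ 2)) * (1 - (1 - z ^ 2)) = (z ^ 2) ^ 2 := by ring
    rw [h2, Real.sqrt_sq (le_of_lt hz2)]
    field_simp
    ring
end
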